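/- The operators $K_{n,a}^{\alpha,\beta}$ reproduce the square function: $K_{n,a}^{\alpha,\beta}(t^2; x) = x^2$ for all $a > 1$, $n \geq 1$, $0 \leq \alpha \leq \beta$, and $x \geq 0$ large enough that the expression under the square root in $r^*_{n,a}$ is nonnegative and $r^*_{n,a}(x;\alpha,\beta) \geq 0$. -/

import Mathlib

/-- Charlier polynomial `C_k^{(a)}(u) = ∑_{r=0}^k (k choose r) (-u)_r (1/a)^r`. -/
noncomputable def charlier (a u : ℝ) (k : ℕ) : ℝ :=
  ∑ r ∈ Finset.range (k + 1),
    (k.choose r : ℝ) * (ascPochhammer ℝ r).eval (-u) * (1 / a) ^ r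

/-- The radicand appearing in the definition of `rstar`. -/
noncomputable def radicand (a α β x : ℝ) (n : ℕ) : ℝ :=
  (4 + 2 * α + 1 / (a - 1)) ^ 2 + 4 * (((n : ℝ) + β) ^ 2 * x ^ 2 - 10 / 3 - 3 * α - α ^ 2)

/-- The function `r*_{n,a}(x; α, β)`. -/
noncomputable def rstar (a α β x : ℝ) (n : ℕ) : ℝ :=
  (-(4 + 2 * α + 1 / (a - 1)) + Real.sqrt (radicand a α β x n)) / (2 * n)

/-- The Kantorovich-Charlier operator `K_{n,a}^{α,β}(f; x)`. -/
noncomputable def K (a α β : ℝ) (n : ℕ) (f : ℝ → ℝ) (x : ℝ) : ℝ :=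
  ((n : ℝ) + β) * Real.exp (-1) * (1 - 1 / a) ^ ((a - 1) * n * rstar a α β x n) *
    ∑' k : ℕ, charlier a (-(a - 1) * n * rstar a α β x n) k / (Nat.factorial k : ℝ) *
      ∫ s in ((k + α) / ((n : ℝ) + β))..((k + α + 1) / ((n : ℝ) + β)), f s


/-! Write `y = 1 / a` and `v = (a - 1) n r*`. The Charlier weight
`C_k(-v) / k! = ∑_{r + j = k} (v)_r y^r / (r! j!)` is the coefficient of `t^k` in
`e^t (1 - t y)^(-v)`, and the `k`-th cell contributes
`∫ t² = ((k + α + 1)³ - (k + α)³) / (3 (n + β)³)`. All terms being nonnegative, the double sum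
may be summed first over `j` and then over `r`; both sums reduce to factorial moments,
`∑_j j^(i) / j! = e` and `∑_r r^(i) (v)_r y^r / r! = (v)_i (y / (1 - y))^i (1 - y)^(-v)`.
The outcome is `e (1 - y)^(-v) (3 w² + 3 B w + 3α² + 9α + 10)` with `w = n r*` and
`B = 4 + 2α + 1 / (a - 1)`, and `r*` is defined as the root of
`w² + B w = (n + β)² x² - 10/3 - 3α - α²`, which turns this into `3 e (1 - y)^(-v) (n + β)² x²`. -/

open Finset Nat Real

theorem ascPochhammer_eval_nonneg {v : ℝ} (hv : 0 ≤ v) (r : ℕ) :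
    0 ≤ (ascPochhammer ℝ r).eval v := by
  induction r with
  | zero => simp
  | succ r ih => rw [ascPochhammer_succ_eval]; positivity

theorem hasSum_ascPochhammer_mul_pow_div_factorial (v : ℝ) {y : ℝ} (hy : |y| < 1) :
    HasSum (fun r => (ascPochhammer ℝ r).eval v * y ^ r / r !) ((1 - y) ^ (-v)) := by
  have h := (one_div_one_sub_rpow_hasFPowerSeriesOnBall_zero v).hasSum
    (y := y) (by simpa [enorm_eq_nnnorm, ← NNReal.coe_lt_coe] using hy)
  have hcoeff (r : ℕ) : Ring.choose (v + r - 1) r = (ascPochhammer ℝ r).eval v / r ! := by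
    rw [← Ring.multichoose_eq, ← Polynomial.ascPochhammer_smeval_eq_eval,
      ← Ring.factorial_nsmul_multichoose_eq_ascPochhammer, nsmul_eq_mul]
    field_simp
  simp only [FormalMultilinearSeries.ofScalars_apply_eq, zero_add, smul_eq_mul, hcoeff] at h
  rw [rpow_neg (by linarith [le_abs_self y]), inv_eq_one_div]
  convert h using 2 with r
  · exact rfl
  · ring

theorem hasSum_descFactorial_mul_div_factorial {c : ℕ → ℝ} (i : ℕ) {S : ℝ}
    (h : HasSum (fun s => c (s + i) / s !) S) :
    HasSum (fun r => (r.descFactorial i : ℝ) * c r / r !) S := by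
  rw [← hasSum_nat_add_iff' i]
  have hlow : ∑ r ∈ range i, (r.descFactorial i : ℝ) * c r / r ! = 0 :=
    sum_eq_zero fun r hr => by rw [descFactorial_eq_zero_iff_lt.2 (mem_range.1 hr)]; simp
  have hshift (s : ℕ) : ((s + i).descFactorial i : ℝ) * c (s + i) / (s + i) ! = c (s + i) / s ! := by
    have hfac := factorial_mul_descFactorial (Nat.le_add_left i s)
    rw [Nat.add_sub_cancel] at hfac
    rw [← hfac]
    push_cast
    field_simp
  simpa only [hlow, sub_zero, hshift] using h

theorem hasSum_descFactorial_div_factorial (i : ℕ) :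
    HasSum (fun r => (r.descFactorial i : ℝ) / r !) (exp 1) := by
  have h := NormedSpace.expSeries_div_hasSum_exp (1 : ℝ)
  rw [← exp_eq_exp_ℝ] at h
  simpa using hasSum_descFactorial_mul_div_factorial (c := fun _ => 1) i (by simpa using h)

theorem hasSum_descFactorial_mul_ascPochhammer (v : ℝ) {y : ℝ} (hy : |y| < 1) (i : ℕ) :
    HasSum (fun r => (r.descFactorial i : ℝ) * ((ascPochhammer ℝ r).eval v * y ^ r) / r !)
      ((ascPochhammer ℝ i).eval v * (y / (1 - y)) ^ i * (1 - y) ^ (-v)) := by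
  have hy1 : 0 < 1 - y := by linarith [le_abs_self y]
  apply hasSum_descFactorial_mul_div_factorial
  have hpoch (s : ℕ) : (ascPochhammer ℝ (s + i)).eval v
      = (ascPochhammer ℝ i).eval v * (ascPochhammer ℝ s).eval (v + i) := by
    rw [add_comm s i, ← ascPochhammer_mul]; simp [add_comm]
  have hpow : (1 - y) ^ (-(v + i)) = (1 - y) ^ (-v) / (1 - y) ^ i := by
    rw [neg_add, rpow_add hy1, rpow_neg hy1.le (i : ℝ), rpow_natCast, div_eq_mul_inv]
  have hval : (ascPochhammer ℝ i).eval v * (y / (1 - y)) ^ i * (1 - y) ^ (-v)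
      = (ascPochhammer ℝ i).eval v * y ^ i * (1 - y) ^ (-(v + i)) := by
    rw [hpow, div_pow]; field_simp
  rw [hval]
  convert (hasSum_ascPochhammer_mul_pow_div_factorial (v + i) hy).mul_left
    ((ascPochhammer ℝ i).eval v * y ^ i) using 2 with s
  · exact rfl
  · rw [hpoch, pow_add]; ring

theorem HasSum.sum_antidiagonal_of_nonneg {g : ℕ × ℕ → ℝ} (hg : 0 ≤ g) {Q : ℕ → ℝ} {T : ℝ}
    (hQ : ∀ r, HasSum (fun j => g (r, j)) (Q r)) (hT : HasSum Q T) :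
    HasSum (fun k => ∑ p ∈ antidiagonal k, g p) T := by
  have hsum : Summable g := (summable_prod_of_nonneg hg).2
    ⟨fun r => (hQ r).summable, by simpa only [(hQ _).tsum_eq] using hT.summable⟩
  have hgT : HasSum g T := by
    convert hsum.hasSum using 1
    rw [hsum.tsum_prod' fun r => (hQ r).summable, ← hT.tsum_eq]
    exact tsum_congr fun r => ((hQ r).tsum_eq).symm
  exact (HasAntidiagonal.sigmaAntidiagonalEquivProd.hasSum_iff.2 hgT).sigma
    fun k => Finset.hasSum (antidiagonal k) g

theorem charlier_div_factorial (a u : ℝ) (k : ℕ) :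
    charlier a u k / k ! = ∑ p ∈ antidiagonal k,
      (ascPochhammer ℝ p.1).eval (-u) * (1 / a) ^ p.1 / p.1 ! / p.2 ! := by
  rw [charlier, sum_div, Nat.sum_antidiagonal_eq_sum_range_succ
    (fun r j => (ascPochhammer ℝ r).eval (-u) * (1 / a) ^ r / r ! / j !)]
  refine sum_congr rfl fun r hr => ?_
  rw [cast_choose ℝ (Nat.lt_succ_iff.1 (mem_range.1 hr))]
  field_simp

theorem hasSum_charlier_div_factorial_mul {a v : ℝ} (ha : 0 ≤ a) (hv : 0 ≤ v) {P Q : ℕ → ℝ}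
    {T : ℝ} (hP : ∀ k, 0 ≤ P k) (hQ : ∀ r, HasSum (fun j => P (r + j) / j !) (Q r))
    (hT : HasSum (fun r => (ascPochhammer ℝ r).eval v * (1 / a) ^ r / r ! * Q r) T) :
    HasSum (fun k => charlier a (-v) k / k ! * P k) T := by
  have hg : 0 ≤ fun p : ℕ × ℕ => (ascPochhammer ℝ p.1).eval v * (1 / a) ^ p.1 / p.1 !
      * (P (p.1 + p.2) / p.2 !) := fun p => by
    have := ascPochhammer_eval_nonneg hv p.1
    have := hP (p.1 + p.2)
    dsimp only [Pi.zero_apply]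
    positivity
  have hfiber (k : ℕ) : charlier a (-v) k / k ! * P k = ∑ p ∈ antidiagonal k,
      (ascPochhammer ℝ p.1).eval v * (1 / a) ^ p.1 / p.1 ! * (P (p.1 + p.2) / p.2 !) := by
    rw [charlier_div_factorial, neg_neg, sum_mul]
    refine sum_congr rfl fun p hp => ?_
    rw [mem_antidiagonal.1 hp]
    ring
  rw [funext hfiber]
  exact HasSum.sum_antidiagonal_of_nonneg hg
    (fun r => (hQ r).mul_left ((ascPochhammer ℝ r).eval v * (1 / a) ^ r / r !)) hT

theorem hasSum_cube_sub_cube_shift_div_factorial (α : ℝ) (r : ℕ) :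
    HasSum (fun j : ℕ => ((((r + j : ℕ) : ℝ) + α + 1) ^ 3 - (((r + j : ℕ) : ℝ) + α) ^ 3) / j !)
      (exp 1 * (3 * (r.descFactorial 2 : ℝ) + (6 * α + 12) * r + (3 * α ^ 2 + 9 * α + 10))) := by
  have h := (((hasSum_descFactorial_div_factorial 2).mul_left 3).add
    ((hasSum_descFactorial_div_factorial 1).mul_left (6 * (r + α) + 6))).add
    ((hasSum_descFactorial_div_factorial 0).mul_left ((r + α + 1) ^ 3 - (r + α) ^ 3))
  have hd : ((r.descFactorial 2 : ℕ) : ℝ) = r * (r - 1) := cast_descFactorial_two ℝ r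
  convert h using 1
  · rfl
  · ext j
    have hdj : ((j.descFactorial 2 : ℕ) : ℝ) = j * (j - 1) := cast_descFactorial_two ℝ j
    rw [hdj, descFactorial_one, descFactorial_zero]
    push_cast
    ring
  · rw [hd]
    ring

theorem hasSum_charlier_div_factorial_mul_cube_sub_cube {a v : ℝ} (ha : 1 < a) (hv : 0 ≤ v) (α : ℝ) :
    HasSum (fun k : ℕ => charlier a (-v) k / k ! * (((k : ℝ) + α + 1) ^ 3 - ((k : ℝ) + α) ^ 3))
      (exp 1 * (1 - 1 / a) ^ (-v) * (3 * v * (v + 1) / (a - 1) ^ 2 + (6 * α + 12) * v / (a - 1)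
        + (3 * α ^ 2 + 9 * α + 10))) := by
  have hy : |1 / a| < 1 := by
    rw [abs_of_pos (by positivity), div_lt_one (by linarith)]; exact ha
  have hρ : 1 / a / (1 - 1 / a) = 1 / (a - 1) := by
    have : a - 1 ≠ 0 := by linarith
    field_simp
  refine hasSum_charlier_div_factorial_mul (by positivity) hv
    (fun k => by nlinarith [sq_nonneg (2 * ((k : ℝ) + α) + 1)])
    (hasSum_cube_sub_cube_shift_div_factorial α) ?_
  have h := (((hasSum_descFactorial_mul_ascPochhammer v hy 2).mul_left (3 * exp 1)).add
    ((hasSum_descFactorial_mul_ascPochhammer v hy 1).mul_left ((6 * α + 12) * exp 1))).add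
    ((hasSum_descFactorial_mul_ascPochhammer v hy 0).mul_left ((3 * α ^ 2 + 9 * α + 10) * exp 1))
  simp only [descFactorial_one, descFactorial_zero, hρ, ascPochhammer_succ_eval,
    ascPochhammer_zero, Polynomial.eval_one] at h
  convert h using 1
  · rfl
  · ext r
    have hd : ((r.descFactorial 2 : ℕ) : ℝ) = r * (r - 1) := cast_descFactorial_two ℝ r
    rw [hd]
    ring
  · have : a - 1 ≠ 0 := by linarith
    push_cast
    field_simp
    ring

theorem integral_sq_div (c N : ℝ) (hN : N ≠ 0) :
    ∫ t in c / N..(c + 1) / N, t ^ 2 = ((c + 1) ^ 3 - c ^ 3) / (3 * N ^ 3) := by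
  rw [integral_pow, div_pow, div_pow]
  field_simp
  ring

theorem rstar_quadratic {a α β x : ℝ} {n : ℕ} (hn : n ≠ 0) (hrad : 0 ≤ radicand a α β x n) :
    (n * rstar a α β x n) ^ 2 + (4 + 2 * α + 1 / (a - 1)) * (n * rstar a α β x n)
      = ((n : ℝ) + β) ^ 2 * x ^ 2 - 10 / 3 - 3 * α - α ^ 2 := by
  have hs := sq_sqrt hrad
  rw [rstar]
  generalize √(radicand a α β x n) = s at hs ⊢
  rw [radicand] at hs
  field_simp
  linear_combination 3 * hs

theorem K_sq_general (a α β x : ℝ) (n : ℕ) (ha : 1 < a) (hn : 1 ≤ n)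
    (hα : 0 ≤ α) (hαβ : α ≤ β)
    (hrad : 0 ≤ radicand a α β x n) (hr : 0 ≤ rstar a α β x n) :
    K a α β n (fun t => t ^ 2) x = x ^ 2 := by
  have hN : (n : ℝ) + β ≠ 0 := by
    have : (1 : ℝ) ≤ n := by exact_mod_cast hn
    linarith
  have hv : 0 ≤ (a - 1) * n * rstar a α β x n := by
    have : 0 ≤ a - 1 := by linarith
    positivity
  have hquad := rstar_quadratic (by omega) hrad
  have hsum := (hasSum_charlier_div_factorial_mul_cube_sub_cube ha hv α).div_const
    (3 * ((n : ℝ) + β) ^ 3)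
  simp only [K, integral_sq_div _ _ hN, neg_mul, mul_div_assoc']
  rw [hsum.tsum_eq]
  have ha1 : a - 1 ≠ 0 := by linarith
  have hp : 0 < 1 - 1 / a := by
    rw [sub_pos, div_lt_one (by linarith)]; exact ha
  rw [exp_neg, rpow_neg hp.le]
  generalize rstar a α β x n = m at hquad
  have hp0 := (rpow_pos_of_pos hp ((a - 1) * n * m)).ne'
  generalize (1 - 1 / a) ^ ((a - 1) * n * m) = p at hp0 ⊢
  field_simp at hquad ⊢
  linear_combination hquad

/-- The operators K reproduce the square function. -/
theorem K_sq (a α β x : ℝ) (n : ℕ) (ha : 1 < a) (hn : 1 ≤ n)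
    (hα : 0 ≤ α) (hαβ : α ≤ β) (hx : 0 ≤ x)
    (hrad : 0 ≤ radicand a α β x n) (hr : 0 ≤ rstar a α β x n) :
    K a α β n (fun t => t ^ 2) x = x ^ 2 :=
  K_sq_general a α β x n ha hn hα hαβ hrad hr
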